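/- Let g ~ qbl(k1, γ) with witness constant d, set k0 := ⌈log N / γ⌉ and suppose N ≥ e^{γ k1}. Then for every i ∈ {1,…,N} and every bijection h of {1,…,N}: E[ |g(t_{h(i)}) − g(t_i)|² ] ≤ 3·E[ |g^{k0}(t_{h(i)}) − g^{k0}(t_i)|² ] + 24·d²/((1 − e^{−γ})²·N²). -/

import Mathlib

/-!
Cutting the Fourier series of `g` at `k0 ≥ k1` leaves a tail dominated by a geometric series,
so `‖g - g^{k0}‖ ≤ M := 2 d e^{-γ(k0+1)} / (1 - e^{-γ})` uniformly, and the choice of `k0`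
makes `e^{-γ(k0+1)} ≤ 1/N`. Pointwise `‖g x - g y‖ ≤ ‖g^{k0} x - g^{k0} y‖ + 2M`, and
`(A + 2M)² ≤ 3A² + 6M²`; integrating gives the claim.
-/

open MeasureTheory ProbabilityTheory Finset

noncomputable section

/-- `t` is the vector of order statistics of `N` i.i.d. samples from the uniform
distribution on the interval `[0, b]`: there exist i.i.d. random variables `u i`,
each uniformly distributed on `[0, b]`, such that for every `ω` the vector
`(t i ω)_i` is the monotone rearrangement of `(u i ω)_i`. -/
def IsUniformOrderStats {Ω : Type*} [MeasurableSpace Ω] (μ : Measure Ω) (b : ℝ)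
    {N : ℕ} (t : Fin N → Ω → ℝ) : Prop :=
  ∃ u : Fin N → Ω → ℝ,
    (∀ i, Measurable (u i)) ∧
    iIndepFun u μ ∧
    (∀ i, Measure.map (u i) μ = (ENNReal.ofReal b)⁻¹ • volume.restrict (Set.Icc 0 b)) ∧
    ∀ ω, Monotone (fun i => t i ω) ∧ ∃ σ : Equiv.Perm (Fin N), ∀ i, t i ω = u (σ i) ω

/-- The 1-periodic trigonometric polynomial `∑_{|k| ≤ k0} c k · e^{2πjkx}`. -/
def trigPoly (k0 : ℕ) (c : ℤ → ℂ) (x : ℝ) : ℂ :=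
  ∑ k ∈ Finset.Icc (-(k0 : ℤ)) (k0 : ℤ), c k *
    Complex.exp (2 * (Real.pi : ℂ) * Complex.I * (k : ℂ) * (x : ℂ))

theorem Monotone.le_iff_lt_card_filter {α : Type*} [LinearOrder α] {N : ℕ} {f : Fin N → α}
    (hf : Monotone f) (j : Fin N) (c : α) : f j ≤ c ↔ (j : ℕ) < #{l | f l ≤ c} := by
  constructor
  · intro hj
    have hsub : Iic j ⊆ ({l | f l ≤ c} : Finset (Fin N)) := fun l hl => by
      simpa using (hf (mem_Iic.1 hl)).trans hj
    simpa [Nat.lt_succ_iff] using card_le_card hsub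
  · intro hlt
    by_contra! hcj
    have hsub : ({l | f l ≤ c} : Finset (Fin N)) ⊆ Iio j := fun l hl => by
      simp only [mem_filter, mem_univ, true_and] at hl
      exact mem_Iio.2 (lt_of_not_ge fun hjl => (hcj.trans_le (hf hjl)).not_ge hl)
    simpa using hlt.trans_le (card_le_card hsub)

theorem measurable_of_monotone_perm {Ω : Type*} [MeasurableSpace Ω] {N : ℕ}
    {u t : Fin N → Ω → ℝ} (hu : ∀ k, Measurable (u k))
    (ht : ∀ ω, Monotone (fun i => t i ω) ∧ ∃ σ : Equiv.Perm (Fin N), ∀ i, t i ω = u (σ i) ω)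
    (j : Fin N) : Measurable (t j) := by
  refine measurable_of_Iic fun c => ?_
  have hpre : t j ⁻¹' Set.Iic c = {ω | (j : ℕ) < #{k | u k ω ≤ c}} := by
    ext ω
    obtain ⟨hmono, σ, hσ⟩ := ht ω
    have hcard : #{l | t l ω ≤ c} = #{k | u k ω ≤ c} :=
      card_equiv σ fun l => by simp [hσ]
    simp [hmono.le_iff_lt_card_filter j c, hcard]
  have hcount : Measurable fun ω => #{k | u k ω ≤ c} := by
    simp_rw [card_filter]
    exact Finset.measurable_sum _ fun k _ =>
      Measurable.ite (measurableSet_le (hu k) measurable_const) measurable_const measurable_const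
  rw [hpre]
  exact measurableSet_lt measurable_const hcount

theorem IsUniformOrderStats.measurable {Ω : Type*} [MeasurableSpace Ω] {μ : Measure Ω} {b : ℝ}
    {N : ℕ} {t : Fin N → Ω → ℝ} (ht : IsUniformOrderStats μ b t) (j : Fin N) :
    Measurable (t j) :=
  let ⟨_, hu, _, _, hrearr⟩ := ht
  measurable_of_monotone_perm hu hrearr j

theorem hasSum_ite_le_pow {r : ℝ} (hr0 : 0 ≤ r) (hr1 : r < 1) (m : ℕ) :
    HasSum (fun n : ℕ => if m ≤ n then r ^ n else 0) (r ^ m / (1 - r)) := by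
  rw [← hasSum_nat_add_iff' m]
  have hhead : ∑ n ∈ range m, (if m ≤ n then r ^ n else 0) = 0 :=
    sum_eq_zero fun n hn => if_neg (by simpa using hn)
  have hshift :
      (fun n : ℕ => if m ≤ n + m then r ^ (n + m) else 0) = fun n => r ^ m * r ^ n := by
    ext n
    rw [if_pos (Nat.le_add_left m n), pow_add, mul_comm]
  rw [hhead, sub_zero, hshift, div_eq_mul_inv]
  exact (hasSum_geometric_of_lt_one hr0 hr1).mul_left (r ^ m)

theorem hasSum_ite_lt_natAbs_pow {r : ℝ} (hr0 : 0 ≤ r) (hr1 : r < 1) (m : ℕ) :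
    HasSum (fun k : ℤ => if m < k.natAbs then r ^ k.natAbs else 0)
      (2 * r ^ (m + 1) / (1 - r)) := by
  set w : ℤ → ℝ := fun k => if m < k.natAbs then r ^ k.natAbs else 0
  have hpos : HasSum (fun n : ℕ => w n) (r ^ (m + 1) / (1 - r)) :=
    (hasSum_ite_le_pow hr0 hr1 (m + 1)).congr_fun fun n => by
      simp only [w, Int.natAbs_natCast, Nat.lt_iff_add_one_le]
  have hneg : HasSum (fun n : ℕ => w (-(n + 1))) (r * (r ^ m / (1 - r))) :=
    ((hasSum_ite_le_pow hr0 hr1 m).mul_left r).congr_fun fun n => by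
      have hn : (-((n : ℤ) + 1)).natAbs = n + 1 := by omega
      simp only [w, hn, Nat.lt_add_one_iff, mul_ite, mul_zero, pow_succ']
  convert hpos.of_nat_of_neg_add_one hneg using 1
  ring

theorem norm_cexp_two_pi_I_int_mul (k : ℤ) (x : ℝ) :
    ‖Complex.exp (2 * (Real.pi : ℂ) * Complex.I * (k : ℂ) * (x : ℂ))‖ = 1 := by
  have h : 2 * (Real.pi : ℂ) * Complex.I * (k : ℂ) * (x : ℂ)
      = ((2 * Real.pi * k * x : ℝ) : ℂ) * Complex.I := by push_cast; ring
  rw [h, Complex.norm_exp_ofReal_mul_I]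

theorem norm_sub_trigPoly_le {a : ℤ → ℂ} {x : ℝ} {s : ℂ} {d r : ℝ} {k0 : ℕ}
    (hr0 : 0 ≤ r) (hr1 : r < 1)
    (hs : HasSum (fun k : ℤ =>
      a k * Complex.exp (2 * (Real.pi : ℂ) * Complex.I * (k : ℂ) * (x : ℂ))) s)
    (ha : ∀ k : ℤ, k0 < k.natAbs → ‖a k‖ ≤ d * r ^ k.natAbs) :
    ‖s - trigPoly k0 a x‖ ≤ 2 * d * r ^ (k0 + 1) / (1 - r) := by
  set f : ℤ → ℂ := fun k =>
    a k * Complex.exp (2 * (Real.pi : ℂ) * Complex.I * (k : ℂ) * (x : ℂ))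
  have hmem : ∀ k : ℤ, k ∈ Icc (-(k0 : ℤ)) k0 ↔ k.natAbs ≤ k0 := fun k => by
    rw [mem_Icc]; omega
  have hhead :
      HasSum (fun k => if k ∈ Icc (-(k0 : ℤ)) k0 then f k else 0) (trigPoly k0 a x) := by
    convert hasSum_sum_of_ne_finset_zero (L := .unconditional ℤ)
      fun k (hk : k ∉ Icc (-(k0 : ℤ)) k0) => if_neg hk
    exact (sum_congr rfl fun k hk => if_pos hk).symm
  have htail : HasSum (fun k => if k0 < k.natAbs then f k else 0) (s - trigPoly k0 a x) := by
    refine (hs.sub hhead).congr_fun fun k => ?_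
    by_cases hk : k0 < k.natAbs
    · rw [if_pos hk, if_neg (by rw [hmem]; omega), sub_zero]
    · rw [if_neg hk, if_pos (by rw [hmem]; omega), sub_self]
  have hbound := (hasSum_ite_lt_natAbs_pow hr0 hr1 k0).mul_left d
  rw [← mul_div_assoc, ← mul_assoc, mul_comm d] at hbound
  refine htail.norm_le_of_bounded hbound fun k => ?_
  split_ifs with hk
  · simpa [f, norm_cexp_two_pi_I_int_mul] using ha k hk
  · simp

theorem continuous_trigPoly (k0 : ℕ) (c : ℤ → ℂ) : Continuous (trigPoly k0 c) := by
  unfold trigPoly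
  fun_prop

theorem norm_trigPoly_le (k0 : ℕ) (c : ℤ → ℂ) (x : ℝ) :
    ‖trigPoly k0 c x‖ ≤ ∑ k ∈ Icc (-(k0 : ℤ)) k0, ‖c k‖ :=
  (norm_sum_le _ _).trans_eq <| sum_congr rfl fun k _ => by
    rw [norm_mul, norm_cexp_two_pi_I_int_mul, mul_one]

theorem integrable_norm_trigPoly_sub_sq {Ω : Type*} [MeasurableSpace Ω] (μ : Measure Ω)
    [IsFiniteMeasure μ] (k0 : ℕ) (c : ℤ → ℂ) {X Y : Ω → ℝ} (hX : Measurable X)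
    (hY : Measurable Y) :
    Integrable (fun ω => ‖trigPoly k0 c (X ω) - trigPoly k0 c (Y ω)‖ ^ 2) μ := by
  have hP := (continuous_trigPoly k0 c).measurable
  refine .of_bound (((hP.comp hX).sub (hP.comp hY)).norm.pow_const 2).aestronglyMeasurable
    ((2 * ∑ k ∈ Icc (-(k0 : ℤ)) k0, ‖c k‖) ^ 2) (ae_of_all _ fun ω => ?_)
  rw [norm_pow, norm_norm]
  gcongr
  linarith [norm_sub_le (trigPoly k0 c (X ω)) (trigPoly k0 c (Y ω)),
    norm_trigPoly_le k0 c (X ω), norm_trigPoly_le k0 c (Y ω)]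

theorem norm_sub_sq_le_of_norm_sub_le {E : Type*} [SeminormedAddCommGroup E] {u v p q : E}
    {M : ℝ} (hu : ‖u - p‖ ≤ M) (hv : ‖v - q‖ ≤ M) :
    ‖u - v‖ ^ 2 ≤ 3 * ‖p - q‖ ^ 2 + 6 * M ^ 2 := by
  have hle : ‖u - v‖ ≤ ‖p - q‖ + 2 * M :=
    calc ‖u - v‖ = ‖(p - q) + ((u - p) - (v - q))‖ := by congr 1; abel
      _ ≤ ‖p - q‖ + (‖u - p‖ + ‖v - q‖) :=
        (norm_add_le _ _).trans (by gcongr; exact norm_sub_le _ _)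
      _ ≤ ‖p - q‖ + 2 * M := by linarith
  -- `(A + 2M)² ≤ 3A² + 6M²` is `2 (A - M)² ≥ 0`.
  nlinarith [pow_le_pow_left₀ (norm_nonneg _) hle 2, sq_nonneg (‖p - q‖ - M)]

theorem integral_le_integral_add_of_le {Ω : Type*} [MeasurableSpace Ω] {μ : Measure Ω}
    [IsProbabilityMeasure μ] {F G : Ω → ℝ} {c : ℝ} (hF : 0 ≤ F) (hG : Integrable G μ)
    (hFG : ∀ ω, F ω ≤ G ω + c) : ∫ ω, F ω ∂μ ≤ ∫ ω, G ω ∂μ + c := by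
  calc ∫ ω, F ω ∂μ ≤ ∫ ω, (G ω + c) ∂μ :=
        integral_mono_of_nonneg (ae_of_all _ hF) (hG.add (integrable_const c)) (ae_of_all _ hFG)
    _ = ∫ ω, G ω ∂μ + c := by simp [integral_add hG (integrable_const c)]

theorem le_ceil_log_div_of_exp_mul_le {γ : ℝ} (hγ : 0 < γ) {k1 N : ℕ}
    (hN : Real.exp (γ * k1) ≤ N) : k1 ≤ ⌈Real.log N / γ⌉₊ := by
  have hlog : γ * k1 ≤ Real.log N := (Real.le_log_iff_exp_le ((Real.exp_pos _).trans_le hN)).2 hN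
  exact_mod_cast (le_div_iff₀' hγ).2 hlog |>.trans (Nat.le_ceil _)

theorem exp_neg_pow_mul_le_one {γ : ℝ} (hγ : 0 < γ) {N : ℝ} (hN : 0 < N) {k : ℕ}
    (hk : Real.log N / γ ≤ k) : Real.exp (-γ) ^ k * N ≤ 1 := by
  rw [← Real.exp_nat_mul, ← Real.exp_log hN, ← Real.exp_add, Real.exp_le_one_iff]
  rw [div_le_iff₀ hγ] at hk
  linarith

theorem six_mul_sq_le_of_mul_le_one {d r q N : ℝ} (hr1 : r < 1) (hN : 0 < N) (hq : 0 ≤ q)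
    (hqN : q * N ≤ 1) :
    6 * (2 * d * q / (1 - r)) ^ 2 ≤ 24 * d ^ 2 / ((1 - r) ^ 2 * N ^ 2) := by
  have h1r : 0 < 1 - r := sub_pos.2 hr1
  rw [le_div_iff₀ (by positivity)]
  calc 6 * (2 * d * q / (1 - r)) ^ 2 * ((1 - r) ^ 2 * N ^ 2) = 24 * d ^ 2 * (q * N) ^ 2 := by
        field_simp; ring
    _ ≤ 24 * d ^ 2 := mul_le_of_le_one_right (by positivity) (pow_le_one₀ (by positivity) hqN)

theorem misordering_qbl_to_bandlimited_general (γ : ℝ) (hγ : 0 < γ) (d : ℝ)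
    (k1 N : ℕ) (Ω : Type) [MeasurableSpace Ω] (μ : Measure Ω)
    [IsProbabilityMeasure μ] (t : Fin N → Ω → ℝ) (g : ℝ → ℂ) (a : ℤ → ℂ)
    (h : Equiv.Perm (Fin N)) (i : Fin N) (k0 : ℕ)
    (hord : IsUniformOrderStats μ 1 t)
    (hsum : ∀ x : ℝ, HasSum (fun k : ℤ =>
      a k * Complex.exp (2 * (Real.pi : ℂ) * Complex.I * (k : ℂ) * (x : ℂ))) (g x))
    (hqbl : ∀ k : ℤ, (k1 : ℤ) ≤ |k| → ‖a k‖ ≤ d * Real.exp (-γ * (|k| : ℤ)))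
    (hk0 : k0 = ⌈Real.log N / γ⌉₊)
    (hN : Real.exp (γ * k1) ≤ N) :
    (∫ ω, ‖g (t (h i) ω) - g (t i ω)‖ ^ 2 ∂μ)
      ≤ 3 * (∫ ω, ‖trigPoly k0 a (t (h i) ω) - trigPoly k0 a (t i ω)‖ ^ 2 ∂μ)
        + 24 * d ^ 2 / ((1 - Real.exp (-γ)) ^ 2 * (N : ℝ) ^ 2) := by
  set r := Real.exp (-γ)
  have hr1 : r < 1 := Real.exp_lt_one_iff.2 (neg_neg_of_pos hγ)
  have hNpos : (0 : ℝ) < N := (Real.exp_pos _).trans_le hN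
  have ha : ∀ k : ℤ, k0 < k.natAbs → ‖a k‖ ≤ d * r ^ k.natAbs := fun k hk => by
    have hk1 : (k1 : ℤ) ≤ |k| := by
      have := hk0 ▸ le_ceil_log_div_of_exp_mul_le hγ hN
      rw [Int.abs_eq_natAbs]
      omega
    simpa [r, ← Real.exp_nat_mul, Int.cast_abs, mul_comm] using hqbl k hk1
  set M := 2 * d * r ^ (k0 + 1) / (1 - r)
  have htail (x : ℝ) : ‖g x - trigPoly k0 a x‖ ≤ M :=
    norm_sub_trigPoly_le (Real.exp_nonneg _) hr1 (hsum x) ha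
  have hM : 6 * M ^ 2 ≤ 24 * d ^ 2 / ((1 - r) ^ 2 * (N : ℝ) ^ 2) :=
    six_mul_sq_le_of_mul_le_one hr1 hNpos (by positivity) <| exp_neg_pow_mul_le_one hγ hNpos <|
      hk0 ▸ (Nat.le_ceil _).trans (by simp)
  calc (∫ ω, ‖g (t (h i) ω) - g (t i ω)‖ ^ 2 ∂μ)
      ≤ ∫ ω, 3 * ‖trigPoly k0 a (t (h i) ω) - trigPoly k0 a (t i ω)‖ ^ 2 ∂μ + 6 * M ^ 2 :=
        integral_le_integral_add_of_le (fun _ => sq_nonneg _)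
          ((integrable_norm_trigPoly_sub_sq μ k0 a (hord.measurable _)
            (hord.measurable _)).const_mul 3)
          fun ω => norm_sub_sq_le_of_norm_sub_le (htail _) (htail _)
    _ ≤ _ := by rw [integral_const_mul]; gcongr

/-- For `g ~ qbl(k1, γ)` with witness `d`, `k0 = ⌈log N / γ⌉`,
`N ≥ e^{γ k1}`, every `i` and every bijection `h`:
`E[|g(t_{h(i)}) − g(t_i)|²] ≤ 3 E[|g^{k0}(t_{h(i)}) − g^{k0}(t_i)|²]
  + 24 d²/((1 − e^{−γ})² N²)`. -/
theorem misordering_qbl_to_bandlimited (γ : ℝ) (hγ : 0 < γ) (d : ℝ) (hd : 0 ≤ d)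
    (k1 N : ℕ) (Ω : Type) [MeasurableSpace Ω] (μ : Measure Ω)
    [IsProbabilityMeasure μ] (t : Fin N → Ω → ℝ) (g : ℝ → ℂ) (a : ℤ → ℂ)
    (h : Equiv.Perm (Fin N)) (i : Fin N) (k0 : ℕ)
    (hord : IsUniformOrderStats μ 1 t)
    (hper : Function.Periodic g 1)
    (hbd : ∀ x : ℝ, ‖g x‖ < 1)
    (hsum : ∀ x : ℝ, HasSum (fun k : ℤ =>
      a k * Complex.exp (2 * (Real.pi : ℂ) * Complex.I * (k : ℂ) * (x : ℂ))) (g x))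
    (hqbl : ∀ k : ℤ, (k1 : ℤ) ≤ |k| → ‖a k‖ ≤ d * Real.exp (-γ * (|k| : ℤ)))
    (hk0 : k0 = ⌈Real.log N / γ⌉₊)
    (hN : Real.exp (γ * k1) ≤ N) :
    (∫ ω, ‖g (t (h i) ω) - g (t i ω)‖ ^ 2 ∂μ)
      ≤ 3 * (∫ ω, ‖trigPoly k0 a (t (h i) ω) - trigPoly k0 a (t i ω)‖ ^ 2 ∂μ)
        + 24 * d ^ 2 / ((1 - Real.exp (-γ)) ^ 2 * (N : ℝ) ^ 2) :=
  misordering_qbl_to_bandlimited_general γ hγ d k1 N Ω μ t g a h i k0 hord hsum hqbl hk0 hN
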